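/- Let U and M be finite-dimensional real vector spaces, Q : U → U* a symmetric linear map, A : U → M a linear map, and fix λ ∈ M*. Define L = {(δp, δq) ∈ M* × M : ∃ δu ∈ U, A δu = δq and Q δu = A* δp} (i.e. ⟨Q δu, w⟩ = ⟨δp, A w⟩ for all w ∈ U). Then L is a Lagrangian subspace of M* × M with symplectic form σ((δp₁,δq₁),(δp₂,δq₂)) = ⟨δp₁, δq₂⟩ − ⟨δp₂, δq₁⟩. -/

import Mathlib

open Module

/-- The linearized Lagrange-multiplier space
`L = {(δp, δq) : ∃ δu, A δu = δq and Q δu = A* δp}` of a constrained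
optimization problem with Hessian `Q` and constraint differential `A`. -/
def Lspace {U M : Type*} [AddCommGroup U] [Module ℝ U]
    [AddCommGroup M] [Module ℝ M]
    (Q : U →ₗ[ℝ] Module.Dual ℝ U) (A : U →ₗ[ℝ] M) :
    Submodule ℝ (Module.Dual ℝ M × M) where
  carrier := {x | ∃ δu : U, A δu = x.2 ∧ ∀ w : U, Q δu w = x.1 (A w)}
  add_mem' := by
    rintro ⟨p₁, q₁⟩ ⟨p₂, q₂⟩ ⟨u₁, hu₁, hq₁⟩ ⟨u₂, hu₂, hq₂⟩
    exact ⟨u₁ + u₂, by simp [hu₁, hu₂], fun w => by simp [hq₁ w, hq₂ w]⟩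
  zero_mem' := ⟨0, by simp, fun w => by simp⟩
  smul_mem' := by
    rintro c ⟨p, q⟩ ⟨u, hu, hq⟩
    exact ⟨c • u, by simp [hu], fun w => by simp [hq w]⟩


/-!
Isotropy is the symmetry of `Q`: for `(δpᵢ, A δuᵢ) ∈ L` both `δp₁ (A δu₂)` and `δp₂ (A δu₁)` equal
`Q δu₁ δu₂`. For the dimension, `L` is the image under `(δp, δu) ↦ (δp, A δu)` of the kernel of
the stationarity map `Φ (δp, δu) = A* δp - Q δu`, and on `ker Φ` this projection has kernel
`0 × (ker Q ∩ ker A)`. The annihilator of `range Φ = range A* + range Q` is `ker A ∩ ker Q` (the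
symmetry of `Q` is used again here), so `dim ker Φ = dim M + dim (ker Q ∩ ker A)`, and the two
copies of `dim (ker Q ∩ ker A)` cancel.
-/

open LinearMap

theorem Submodule.finrank_map_add_finrank_inf_ker {K V W : Type*} [DivisionRing K]
    [AddCommGroup V] [Module K V] [FiniteDimensional K V] [AddCommGroup W] [Module K W]
    (p : Submodule K V) (f : V →ₗ[K] W) :
    finrank K (p.map f) + finrank K ↥(p ⊓ ker f) = finrank K p := by
  rw [← range_domRestrict, ← Submodule.map_comap_subtype, Submodule.finrank_map_subtype_eq,
    ← ker_domRestrict]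
  exact (f.domRestrict p).finrank_range_add_finrank_ker

theorem LinearMap.dualCoannihilator_range_eq_ker_of_symm {K V : Type*} [CommSemiring K]
    [AddCommMonoid V] [Module K V] (B : V →ₗ[K] Dual K V) (hB : ∀ u v, B u v = B v u) :
    (range B).dualCoannihilator = ker B := by
  rw [dualCoannihilator_range_eq_ker_flip]
  congr 1
  ext u v
  exact hB v u

theorem LinearMap.dualCoannihilator_range_dualMap {K V W : Type*} [Field K]
    [AddCommGroup V] [Module K V] [AddCommGroup W] [Module K W] (f : V →ₗ[K] W) :
    (range f.dualMap).dualCoannihilator = ker f := by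
  rw [range_dualMap_eq_dualAnnihilator_ker, Subspace.dualAnnihilator_dualCoannihilator_eq]

section Lspace

variable {U M : Type*} [AddCommGroup U] [Module ℝ U] [AddCommGroup M] [Module ℝ M]

theorem Lspace_isotropic (Q : U →ₗ[ℝ] Dual ℝ U) (hQ : ∀ u v, Q u v = Q v u) (A : U →ₗ[ℝ] M) :
    ∀ x ∈ Lspace Q A, ∀ y ∈ Lspace Q A, x.1 y.2 - y.1 x.2 = 0 := by
  rintro ⟨p₁, -⟩ ⟨u₁, rfl, hu₁⟩ ⟨p₂, -⟩ ⟨u₂, rfl, hu₂⟩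
  rw [← hu₁, ← hu₂, hQ, sub_self]

noncomputable def stationarityMap (Q : U →ₗ[ℝ] Dual ℝ U) (A : U →ₗ[ℝ] M) :
    Dual ℝ M × U →ₗ[ℝ] Dual ℝ U :=
  A.dualMap.coprod (-Q)

theorem mem_ker_stationarityMap {Q : U →ₗ[ℝ] Dual ℝ U} {A : U →ₗ[ℝ] M} {p : Dual ℝ M} {u : U} :
    (p, u) ∈ ker (stationarityMap Q A) ↔ A.dualMap p = Q u := by
  simp [stationarityMap, ← sub_eq_add_neg, sub_eq_zero]

theorem Lspace_eq_map_ker_stationarityMap (Q : U →ₗ[ℝ] Dual ℝ U) (A : U →ₗ[ℝ] M) :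
    Lspace Q A = (ker (stationarityMap Q A)).map (LinearMap.id.prodMap A) := by
  ext ⟨p, q⟩
  constructor
  · rintro ⟨u, rfl, hu⟩
    exact ⟨(p, u), mem_ker_stationarityMap.mpr (LinearMap.ext fun w => (hu w).symm), rfl⟩
  · rintro ⟨⟨p, u⟩, hu, ⟨⟩⟩
    exact ⟨u, rfl, fun w => (LinearMap.congr_fun (mem_ker_stationarityMap.mp hu) w).symm⟩

theorem ker_stationarityMap_inf_ker_prodMap (Q : U →ₗ[ℝ] Dual ℝ U) (A : U →ₗ[ℝ] M) :
    ker (stationarityMap Q A) ⊓ ker (LinearMap.id.prodMap A) = (ker Q ⊓ ker A).map (inr ℝ _ _) := by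
  ext ⟨p, u⟩
  rw [Submodule.mem_inf, mem_ker_stationarityMap]
  simp only [mem_ker, prodMap_apply, id_apply, Prod.mk_eq_zero, Submodule.mem_map,
    Submodule.mem_inf, inr_apply, Prod.mk.injEq]
  constructor
  · rintro ⟨h, rfl, hA⟩
    exact ⟨u, ⟨by simpa using h.symm, hA⟩, rfl, rfl⟩
  · rintro ⟨u, ⟨hQ, hA⟩, rfl, rfl⟩
    exact ⟨by simp [hQ], rfl, hA⟩

theorem finrank_ker_stationarityMap [FiniteDimensional ℝ U] [FiniteDimensional ℝ M]
    (Q : U →ₗ[ℝ] Dual ℝ U) (hQ : ∀ u v, Q u v = Q v u) (A : U →ₗ[ℝ] M) :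
    finrank ℝ (ker (stationarityMap Q A)) = finrank ℝ M + finrank ℝ ↥(ker Q ⊓ ker A) := by
  have hrange : (range (stationarityMap Q A)).dualCoannihilator = ker Q ⊓ ker A := by
    rw [stationarityMap, range_coprod, range_neg, Submodule.dualCoannihilator_sup_eq,
      dualCoannihilator_range_dualMap, dualCoannihilator_range_eq_ker_of_symm Q hQ, inf_comm]
  have hrank := (stationarityMap Q A).finrank_range_add_finrank_ker
  have hann := Subspace.finrank_add_finrank_dualCoannihilator_eq (range (stationarityMap Q A))
  rw [finrank_prod, Subspace.dual_finrank_eq] at hrank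
  rw [hrange] at hann
  omega

end Lspace

theorem Lspace_lagrangian_general {U M : Type*}
    [AddCommGroup U] [Module ℝ U] [FiniteDimensional ℝ U]
    [AddCommGroup M] [Module ℝ M] [FiniteDimensional ℝ M]
    (Q : U →ₗ[ℝ] Module.Dual ℝ U)
    (hQsymm : ∀ u v : U, Q u v = Q v u)
    (A : U →ₗ[ℝ] M) :
    (∀ x ∈ Lspace Q A, ∀ y ∈ Lspace Q A, x.1 y.2 - y.1 x.2 = 0) ∧
      finrank ℝ (Lspace Q A) = finrank ℝ M := by
  refine ⟨Lspace_isotropic Q hQsymm A, ?_⟩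
  have h := (ker (stationarityMap Q A)).finrank_map_add_finrank_inf_ker (LinearMap.id.prodMap A)
  rw [← Lspace_eq_map_ker_stationarityMap, ker_stationarityMap_inf_ker_prodMap,
    ← (Submodule.equivMapOfInjective _ inr_injective _).finrank_eq,
    finrank_ker_stationarityMap Q hQsymm A] at h
  omega

/-- without any regularity assumption, the space `L` is a
Lagrangian subspace of `M* × M` with the symplectic form
`σ((δp₁,δq₁),(δp₂,δq₂)) = ⟨δp₁, δq₂⟩ - ⟨δp₂, δq₁⟩`, provided `U` is
finite-dimensional. -/
theorem Lspace_lagrangian {U M : Type*}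
    [AddCommGroup U] [Module ℝ U] [FiniteDimensional ℝ U]
    [AddCommGroup M] [Module ℝ M] [FiniteDimensional ℝ M]
    (Q : U →ₗ[ℝ] Module.Dual ℝ U)
    (hQsymm : ∀ u v : U, Q u v = Q v u)
    (A : U →ₗ[ℝ] M) (lam : Module.Dual ℝ M) :
    (∀ x ∈ Lspace Q A, ∀ y ∈ Lspace Q A, x.1 y.2 - y.1 x.2 = 0) ∧
      finrank ℝ (Lspace Q A) = finrank ℝ M :=
  Lspace_lagrangian_general Q hQsymm A
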